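/- arXiv:2311.03064 — 9 statements merged into one kernel-verified Lean document; each statement's English description precedes it below -/
import Mathlib

section
/- Let X be a real Banach space, let A ⊆ X be a nonempty bounded convex set, let a ∈ A, and let {V_n : n ∈ ℕ} be a sequence of nonempty subsets of A. Then the following are equivalent: (i) {V_n} is determining for a; (ii) for every slice S of A with a ∈ S there exists m ∈ ℕ with V_m ⊆ S; (iii) whenever x_n ∈ V_n for every n ∈ ℕ, one has a ∈ closedConvexHull({x_n : n ∈ ℕ}). -/
open Set Metric

variable {X : Type*} [NormedAddCommGroup X] [NormedSpace ℝ X]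

/-- A slice of a bounded convex set `A`. -/
def IsSlice (A S : Set X) : Prop :=
  S.Nonempty ∧ ∃ (f : X →L[ℝ] ℝ) (α : ℝ), 0 < α ∧
    S = {x | x ∈ A ∧ sSup (f '' A) - α < f x}

/-- `V` is a determining sequence for the point `a` of `A`. -/
def Determining (A : Set X) (V : ℕ → Set X) (a : X) : Prop :=
  ∀ B ⊆ A, (∀ n, (B ∩ V n).Nonempty) → a ∈ closure (convexHull ℝ B)

/-- `a` is a slicely countably determined point of `A`. -/
def SCDPoint (A : Set X) (a : X) : Prop :=
  a ∈ A ∧ ∃ V : ℕ → Set X, (∀ n, IsSlice A (V n)) ∧ Determining A V a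

/-- equivalent conditions for a sequence of nonempty subsets of `A`
to be determining for a point `a ∈ A`. -/
theorem stmt0 {X : Type*} [NormedAddCommGroup X] [NormedSpace ℝ X] [CompleteSpace X]
    (A : Set X) (hA : A.Nonempty) (hAb : Bornology.IsBounded A) (hAc : Convex ℝ A)
    (a : X) (ha : a ∈ A) (V : ℕ → Set X) (hVA : ∀ n, V n ⊆ A) (hVne : ∀ n, (V n).Nonempty) :
    (Determining A V a ↔
      ∀ S : Set X, IsSlice A S → a ∈ S → ∃ m, V m ⊆ S) ∧
    (Determining A V a ↔
      ∀ x : ℕ → X, (∀ n, x n ∈ V n) → a ∈ closure (convexHull ℝ (Set.range x))) := by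
  have h1 : Determining A V a →
      ∀ x : ℕ → X, (∀ n, x n ∈ V n) → a ∈ closure (convexHull ℝ (Set.range x)) := by
    intro hd x hx
    exact hd (Set.range x) (by rintro _ ⟨n, rfl⟩; exact hVA n (hx n))
      (fun n => ⟨x n, ⟨n, rfl⟩, hx n⟩)
  have h2 : (∀ x : ℕ → X, (∀ n, x n ∈ V n) → a ∈ closure (convexHull ℝ (Set.range x))) →
      ∀ S : Set X, IsSlice A S → a ∈ S → ∃ m, V m ⊆ S := by
    intro hseq S hS haS
    by_contra hc
    push_neg at hc
    obtain ⟨-, f, α, hα, rfl⟩ := hS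
    simp only [Set.not_subset] at hc
    choose x hxV hxS using hc
    have key : a ∈ closure (convexHull ℝ (Set.range x)) := hseq x hxV
    have hsub : closure (convexHull ℝ (Set.range x)) ⊆
        {y : X | f y ≤ sSup (f '' A) - α} := by
      apply closure_minimal
      · apply convexHull_min
        · rintro _ ⟨n, rfl⟩
          have hxA : x n ∈ A := hVA n (hxV n)
          have : ¬ (sSup (f '' A) - α < f (x n)) := fun h => hxS n ⟨hxA, h⟩
          exact le_of_not_gt this
        · exact convex_halfSpace_le ⟨fun _ _ => f.map_add _ _, fun c y => f.map_smul c y⟩ _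
      · exact isClosed_le f.continuous continuous_const
    have := hsub key
    exact absurd haS.2 (not_lt.2 this)
  have h3 : (∀ S : Set X, IsSlice A S → a ∈ S → ∃ m, V m ⊆ S) → Determining A V a := by
    intro hsl B hBA hBV
    by_contra ha'
    obtain ⟨f, u, hfu, hua⟩ := geometric_hahn_banach_closed_point
      ((convex_convexHull ℝ B).closure) isClosed_closure ha'
    have hbdd : BddAbove (f '' A) := (f.lipschitz.isBounded_image hAb).bddAbove
    have hfa : f a ≤ sSup (f '' A) := le_csSup hbdd ⟨a, ha, rfl⟩
    set α : ℝ := sSup (f '' A) - u with hαdef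
    have hα : 0 < α := by
      have : u < sSup (f '' A) := lt_of_lt_of_le hua hfa
      linarith
    have hMα : sSup (f '' A) - α = u := by simp [hαdef]
    have hslice : IsSlice A {x | x ∈ A ∧ sSup (f '' A) - α < f x} :=
      ⟨⟨a, ha, by rw [hMα]; exact hua⟩, f, α, hα, rfl⟩
    obtain ⟨m, hm⟩ := hsl _ hslice ⟨ha, by rw [hMα]; exact hua⟩
    obtain ⟨b, hbB, hbV⟩ := hBV m
    have hbS := hm hbV
    have hbu : u < f b := by rw [← hMα]; exact hbS.2
    have : f b < u := hfu b (subset_closure (subset_convexHull ℝ B hbB))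
    linarith
  exact ⟨⟨fun hd => h2 (h1 hd), h3⟩, ⟨h1, fun hseq => h3 (h2 hseq)⟩⟩
end

section
/- Let X be a real Banach space and let A ⊆ X be a nonempty bounded convex set. Then the set SCD(A) of SCD points of A is convex and is closed relative to A (i.e., if a sequence of SCD points of A converges in norm to a point of A, that point is an SCD point). Moreover, if A is balanced (λA ⊆ A for every scalar λ with |λ| ≤ 1), then SCD(A) is balanced. -/
open Set Metric

variable {X : Type*} [NormedAddCommGroup X] [NormedSpace ℝ X]

lemma slice_isSlice (A : Set X) (hA : A.Nonempty) (hAb : Bornology.IsBounded A)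
    (f : X →L[ℝ] ℝ) {α : ℝ} (hα : 0 < α) :
    IsSlice A {x | x ∈ A ∧ sSup (f '' A) - α < f x} := by
  refine ⟨?_, f, α, hα, rfl⟩
  obtain ⟨y, ⟨x, hx, rfl⟩, hy⟩ := exists_lt_of_lt_csSup (hA.image f)
    (sub_lt_self _ hα)
  exact ⟨x, hx, hy⟩

/-- the set of SCD points of a nonempty bounded convex set is convex,
closed relative to `A`, and balanced whenever `A` is balanced. -/
theorem stmt1 {X : Type*} [NormedAddCommGroup X] [NormedSpace ℝ X] [CompleteSpace X]
    (A : Set X) (hA : A.Nonempty) (hAb : Bornology.IsBounded A) (hAc : Convex ℝ A) :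
    Convex ℝ {a | SCDPoint A a} ∧
    (∀ (u : ℕ → X) (a : X), (∀ n, SCDPoint A (u n)) → a ∈ A →
      Filter.Tendsto u Filter.atTop (nhds a) → SCDPoint A a) ∧
    (Balanced ℝ A → Balanced ℝ {a | SCDPoint A a}) := by
  have hconv : Convex ℝ {a | SCDPoint A a} := by
    rintro a ⟨haA, V, hVs, hVd⟩ b ⟨hbA, W, hWs, hWd⟩ s t hs ht hst
    refine ⟨hAc haA hbA hs ht hst,
      fun n => if Even n then V (n / 2) else W (n / 2), fun n => ?_, ?_⟩
    · by_cases h : Even n <;> simp [h, hVs, hWs]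
    · intro B hB hBn
      have hVm : ∀ n, (B ∩ V n).Nonempty := fun n => by
        have := hBn (2 * n)
        simpa [Nat.even_iff, Nat.mul_div_cancel_left n (by norm_num : 0 < 2)]
          using this
      have hWm : ∀ n, (B ∩ W n).Nonempty := fun n => by
        have := hBn (2 * n + 1)
        have h1 : ¬ Even (2 * n + 1) := by simp [Nat.even_iff, Nat.add_mod]
        have h2 : (2 * n + 1) / 2 = n := by omega
        simpa [h1, h2] using this
      exact (convex_convexHull ℝ B).closure (hVd B hB hVm) (hWd B hB hWm) hs ht hst
  refine ⟨hconv, ?_, ?_⟩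
  · -- relative closedness
    intro u a hu haA hlim
    choose V hVs hVd using fun n => (hu n).2
    refine ⟨haA, fun k => V (Nat.unpair k).1 (Nat.unpair k).2,
      fun k => hVs _ _, ?_⟩
    intro B hB hBn
    have h1 : ∀ n, u n ∈ closure (convexHull ℝ B) := fun n =>
      hVd n B hB (fun m => by
        have := hBn (Nat.pair n m)
        simpa [Nat.unpair_pair] using this)
    exact isClosed_closure.mem_of_tendsto hlim (Filter.Eventually.of_forall h1)
  · -- balancedness
    intro hbal
    have hnegA : ∀ x, x ∈ A → -x ∈ A := by
      intro x hx
      have := hbal (-1) (by norm_num)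
      exact this ⟨x, hx, by simp⟩
    have hneg : ∀ a, SCDPoint A a → SCDPoint A (-a) := by
      rintro a ⟨haA, V, hVs, hVd⟩
      choose hne f α hα hVeq using hVs
      have himg : ∀ n : ℕ, (-(f n)) '' A = f n '' A := by
        intro n
        ext y
        constructor
        · rintro ⟨x, hx, rfl⟩
          exact ⟨-x, hnegA x hx, by simp⟩
        · rintro ⟨x, hx, rfl⟩
          exact ⟨-x, hnegA x hx, by simp⟩
      refine ⟨hnegA a haA,
        fun n => {x | x ∈ A ∧ sSup ((-(f n)) '' A) - α n < (-(f n)) x},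
        fun n => slice_isSlice A hA hAb _ (hα n), ?_⟩
      intro B hB hBn
      have hB' : (fun x => -x) '' B ⊆ A := by
        rintro _ ⟨x, hx, rfl⟩
        exact hnegA x (hB hx)
      have key : ∀ n, (((fun x => -x) '' B) ∩ V n).Nonempty := by
        intro n
        obtain ⟨x, hxB, hxA, hxs⟩ := hBn n
        refine ⟨-x, ⟨x, hxB, rfl⟩, ?_⟩
        rw [hVeq n]
        refine ⟨hnegA x hxA, ?_⟩
        rw [himg n] at hxs
        simpa using hxs
      have h1 := hVd _ hB' key
      have h2 : (fun x => -x) '' B = -B := Set.image_neg_eq_neg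
      rw [h2, convexHull_neg, ← neg_closure] at h1
      simpa using h1
    rintro r hr x ⟨a, ha, rfl⟩
    have ha' : SCDPoint A a := ha
    have hr' : |r| ≤ 1 := by rwa [Real.norm_eq_abs] at hr
    have ht : (0:ℝ) ≤ (1 + r) / 2 := by
      have := neg_le_of_abs_le hr'; linarith
    have hs : (0:ℝ) ≤ (1 - r) / 2 := by
      have := le_of_abs_le hr'; linarith
    have hts : (1 + r) / 2 + (1 - r) / 2 = 1 := by ring
    have h3 := hconv ha' (hneg a ha') ht hs hts
    have h4 : ((1 + r) / 2) • a + ((1 - r) / 2) • (-a) = r • a := by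
      module
    rwa [h4] at h3
end

section
/- Let X be a real Banach space and let A ⊆ X be a nonempty bounded convex set. Then SCD(closure(A)) ∩ A = SCD(A); that is, a point a ∈ A is an SCD point of A if and only if it is an SCD point of the norm closure of A. -/
open Set Metric Bornology

variable {X : Type*} [NormedAddCommGroup X] [NormedSpace ℝ X]

/-!
A continuous functional has the same supremum on `A` and on `closure A`, so for the same functional
and width the slice of `A` lies in the slice of `closure A`, which in turn lies in the closure of the
slice of `A` because the defining half-space is open. Hence a determining sequence of slices of
`closure A` restricts to one of `A`. Conversely, a set meeting every slice of `closure A` is within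
`δ` of a set meeting every slice of `A`, so its closed convex hull is within `δ` of the point, for
every `δ > 0`.
-/

lemma sSup_image_closure_eq {α : Type*} [TopologicalSpace α] {f : α → ℝ} (hf : Continuous f)
    {A : Set α} (hbdd : BddAbove (f '' A)) : sSup (f '' closure A) = sSup (f '' A) := by
  rcases A.eq_empty_or_nonempty with rfl | hA
  · simp
  have hlub : IsLUB (f '' closure A) (sSup (f '' A)) :=
    (isLUB_iff_of_subset_of_subset_closure (image_mono subset_closure)
      (image_closure_subset_closure_image hf)).mp (isLUB_csSup (hA.image f) hbdd)
  exact hlub.csSup_eq (hA.closure.image f)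

def slice (A : Set X) (f : X →L[ℝ] ℝ) (α : ℝ) : Set X :=
  {x | x ∈ A ∧ sSup (f '' A) - α < f x}

lemma isSlice_slice {A : Set X} (hA : A.Nonempty) (f : X →L[ℝ] ℝ) {α : ℝ} (hα : 0 < α) :
    IsSlice A (slice A f α) := by
  obtain ⟨-, ⟨x, hxA, rfl⟩, hx⟩ := exists_lt_of_lt_csSup (hA.image f) (sub_lt_self _ hα)
  exact ⟨⟨x, hxA, hx⟩, f, α, hα, rfl⟩

lemma sSup_image_closure_eq_of_isBounded {A : Set X} (hA : IsBounded A) (f : X →L[ℝ] ℝ) :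
    sSup (f '' closure A) = sSup (f '' A) :=
  sSup_image_closure_eq f.continuous (f.lipschitz.isBounded_image hA).bddAbove

lemma slice_subset_slice_closure {A : Set X} (hA : IsBounded A) (f : X →L[ℝ] ℝ) (α : ℝ) :
    slice A f α ⊆ slice (closure A) f α := by
  rintro x ⟨hxA, hx⟩
  exact ⟨subset_closure hxA, by rwa [sSup_image_closure_eq_of_isBounded hA]⟩

lemma slice_closure_subset_closure_slice {A : Set X} (hA : IsBounded A) (f : X →L[ℝ] ℝ)
    (α : ℝ) : slice (closure A) f α ⊆ closure (slice A f α) := by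
  rintro x ⟨hxA, hx⟩
  rw [sSup_image_closure_eq_of_isBounded hA] at hx
  have hopen : IsOpen {x | sSup (f '' A) - α < f x} := isOpen_lt continuous_const f.continuous
  have hmem := hopen.inter_closure ⟨hx, hxA⟩
  rw [inter_comm] at hmem
  exact hmem

lemma Determining.mono {A A' : Set X} {V W : ℕ → Set X} {a : X} (h : Determining A' V a)
    (hAA' : A ⊆ A') (hWV : ∀ n, W n ⊆ V n) : Determining A W a :=
  fun B hBA hBW => h B (hBA.trans hAA') fun n => (hBW n).mono (inter_subset_inter_right B (hWV n))

lemma Determining.of_subset_closure {A : Set X} {V W : ℕ → Set X} {a : X} (h : Determining A V a)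
    (hVA : ∀ n, V n ⊆ A) (hWV : ∀ n, W n ⊆ closure (V n)) : Determining (closure A) W a := by
  intro B _ hBW
  choose b hbB hbW using hBW
  rw [closure_eq_iInter_cthickening, mem_iInter₂]
  intro δ hδ
  choose g hgV hgb using fun n => Metric.mem_closure_iff.mp (hWV n (hbW n)) δ hδ
  have hg : range g ⊆ cthickening δ B := by
    rintro _ ⟨n, rfl⟩
    exact mem_cthickening_of_dist_le _ (b n) δ B (hbB n) (by rw [dist_comm]; exact (hgb n).le)
  have hconv : closure (convexHull ℝ (range g)) ⊆ cthickening δ (convexHull ℝ B) :=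
    closure_minimal (convexHull_min
      (hg.trans (cthickening_subset_of_subset δ (subset_convexHull ℝ B)))
      ((convex_convexHull ℝ B).cthickening δ)) isClosed_cthickening
  refine hconv (h (range g) ?_ fun n => ⟨g n, mem_range_self n, hgV n⟩)
  rintro _ ⟨n, rfl⟩
  exact hVA n (hgV n)

lemma SCDPoint.of_closure {A : Set X} {a : X} (hA : IsBounded A) (h : SCDPoint (closure A) a)
    (ha : a ∈ A) : SCDPoint A a := by
  obtain ⟨-, V, hV, hdet⟩ := h
  choose f α hα hVeq using fun n => (hV n).2
  refine ⟨ha, fun n => slice A (f n) (α n), fun n => isSlice_slice ⟨a, ha⟩ _ (hα n), ?_⟩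
  exact hdet.mono subset_closure fun n => (slice_subset_slice_closure hA _ _).trans (hVeq n).ge

lemma SCDPoint.to_closure {A : Set X} {a : X} (hA : IsBounded A) (h : SCDPoint A a) :
    SCDPoint (closure A) a := by
  obtain ⟨ha, V, hV, hdet⟩ := h
  choose f α hα hVeq using fun n => (hV n).2
  refine ⟨subset_closure ha, fun n => slice (closure A) (f n) (α n),
    fun n => isSlice_slice ⟨a, subset_closure ha⟩ _ (hα n), ?_⟩
  refine hdet.of_subset_closure (fun n => (hVeq n).trans_subset fun x hx => hx.1) fun n => ?_
  exact (slice_closure_subset_closure_slice hA _ _).trans (closure_mono (hVeq n).ge)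

theorem stmt2_general {X : Type*} [NormedAddCommGroup X] [NormedSpace ℝ X]
    (A : Set X) (hAb : Bornology.IsBounded A) :
    {a | SCDPoint (closure A) a} ∩ A = {a | SCDPoint A a} := by
  ext a
  exact ⟨fun ⟨h, ha⟩ => h.of_closure hAb ha, fun h => ⟨h.to_closure hAb, h.1⟩⟩

/-- `SCD(closure A) ∩ A = SCD(A)` for a nonempty bounded convex set `A`. -/
theorem stmt2 {X : Type*} [NormedAddCommGroup X] [NormedSpace ℝ X] [CompleteSpace X]
    (A : Set X) (hA : A.Nonempty) (hAb : Bornology.IsBounded A) (hAc : Convex ℝ A) :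
    {a | SCDPoint (closure A) a} ∩ A = {a | SCDPoint A a} :=
  stmt2_general A hAb
end

section
/- Let X be a real Banach space and let A ⊆ X be a nonempty bounded convex set. If there is a countable subset of A that is norm-dense in A and consists of SCD points of A, then A is an SCD set. In particular, if A is separable and every point of A is an SCD point of A, then A is an SCD set. -/
open Set Metric

variable {X : Type*} [NormedAddCommGroup X] [NormedSpace ℝ X]

/-- `A` is a slicely countably determined set. -/
def SCDSet {X : Type*} [NormedAddCommGroup X] [NormedSpace ℝ X] (A : Set X) : Prop :=
  ∃ V : ℕ → Set X, (∀ n, IsSlice A (V n)) ∧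
    ∀ B ⊆ A, (∀ n, (B ∩ V n).Nonempty) → A ⊆ closure (convexHull ℝ B)

lemma scd_aux {X : Type*} [NormedAddCommGroup X] [NormedSpace ℝ X]
    (A : Set X) (hA : A.Nonempty)
    (h : ∃ D : Set X, D.Countable ∧ D ⊆ A ∧ A ⊆ closure D ∧ ∀ d ∈ D, SCDPoint A d) :
    SCDSet A := by
  obtain ⟨D, hDc, hDA, hAD, hDscd⟩ := h
  have hDne : D.Nonempty := by
    obtain ⟨a, ha⟩ := hA
    rcases (hAD ha) with h'
    by_contra hne
    rw [not_nonempty_iff_eq_empty] at hne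
    simp [hne] at h'
  obtain ⟨d, rfl⟩ := hDc.exists_eq_range hDne
  choose V hVslice hVdet using fun k => (hDscd (d k) (mem_range_self k)).2
  refine ⟨fun n => V n.unpair.1 n.unpair.2, fun n => hVslice _ _, ?_⟩
  intro B hB hBmeet
  have hD : ∀ k, d k ∈ closure (convexHull ℝ B) := fun k =>
    hVdet k B hB (fun n => by simpa using hBmeet (Nat.pair k n))
  have hsub : range d ⊆ closure (convexHull ℝ B) := range_subset_iff.2 hD
  calc A ⊆ closure (range d) := hAD
    _ ⊆ closure (closure (convexHull ℝ B)) := closure_mono hsub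
    _ = closure (convexHull ℝ B) := closure_closure

/-- a countable dense set of SCD points makes `A` an SCD set; in particular
a separable set all of whose points are SCD points is an SCD set. -/
theorem stmt3 {X : Type*} [NormedAddCommGroup X] [NormedSpace ℝ X] [CompleteSpace X]
    (A : Set X) (hA : A.Nonempty) (hAb : Bornology.IsBounded A) (hAc : Convex ℝ A) :
    ((∃ D : Set X, D.Countable ∧ D ⊆ A ∧ A ⊆ closure D ∧ ∀ d ∈ D, SCDPoint A d) →
      SCDSet A) ∧
    ((TopologicalSpace.IsSeparable A ∧ ∀ a ∈ A, SCDPoint A a) → SCDSet A) := by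
  refine ⟨scd_aux A hA, fun ⟨hsep, hall⟩ => ?_⟩
  obtain ⟨D, hDA, hDc, hAD⟩ := hsep.exists_countable_dense_subset
  exact scd_aux A hA ⟨D, hDc, hDA, hAD, fun d hd => hall d (hDA hd)⟩
end

section
/- Let X be a real Banach space and let A ⊆ X be a nonempty bounded convex set. Then every quasi-denting point of A is an SCD point of A. In particular, every denting point of A is an SCD point of A. -/
open Set Metric

variable {X : Type*} [NormedAddCommGroup X] [NormedSpace ℝ X]

/-- every quasi-denting point of `A` is an SCD point; in particular
every denting point of `A` is an SCD point. -/
theorem stmt4 {X : Type*} [NormedAddCommGroup X] [NormedSpace ℝ X] [CompleteSpace X]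
    (A : Set X) (hA : A.Nonempty) (hAb : Bornology.IsBounded A) (hAc : Convex ℝ A)
    (a : X) (ha : a ∈ A) :
    ((∀ ε > (0 : ℝ), ∃ S : Set X, IsSlice A S ∧ S ⊆ Metric.closedBall a ε) →
      SCDPoint A a) ∧
    ((∀ ε > (0 : ℝ), ∃ S : Set X, IsSlice A S ∧ a ∈ S ∧ Metric.diam S ≤ ε) →
      SCDPoint A a) := by
  have main : (∀ ε > (0 : ℝ), ∃ S : Set X, IsSlice A S ∧ S ⊆ Metric.closedBall a ε) →
      SCDPoint A a := by
    intro h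
    refine ⟨ha, ?_⟩
    have h' : ∀ n : ℕ, ∃ S : Set X, IsSlice A S ∧ S ⊆ Metric.closedBall a (1 / (n + 1)) := by
      intro n
      exact h (1 / (n + 1)) (by positivity)
    choose V hV hVb using h'
    refine ⟨V, hV, ?_⟩
    intro B hB hBV
    have haB : a ∈ closure B := by
      rw [Metric.mem_closure_iff]
      intro ε hε
      obtain ⟨n, hn⟩ := exists_nat_one_div_lt hε
      obtain ⟨x, hxB, hxV⟩ := hBV n
      refine ⟨x, hxB, ?_⟩
      have := hVb n hxV
      rw [Metric.mem_closedBall] at this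
      calc dist a x = dist x a := dist_comm _ _
        _ ≤ 1 / (n + 1) := this
        _ < ε := hn
    exact closure_mono (subset_convexHull ℝ B) haB
  refine ⟨main, fun h => main ?_⟩
  intro ε hε
  obtain ⟨S, hS, haS, hd⟩ := h ε hε
  refine ⟨S, hS, fun x hx => ?_⟩
  rw [Metric.mem_closedBall]
  have hSb : Bornology.IsBounded S := by
    obtain ⟨-, f, α, -, hSeq⟩ := hS
    exact hAb.subset (by rw [hSeq]; exact fun y hy => hy.1)
  exact le_trans (Metric.dist_le_diam_of_mem hSb hx haS) hd
end

section
/- Let X be a real Banach space, let A ⊆ X be a nonempty bounded convex set, and let a ∈ A. If for every ε > 0 there exists a convex combination C of slices of A with C ⊆ a + εB_X, then a is an SCD point of A. In particular, every strongly regular point of A is an SCD point of A. -/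
open Set Metric

variable {X : Type*} [NormedAddCommGroup X] [NormedSpace ℝ X]

/-- `C` is a convex combination of (finitely many) slices of `A`. -/
def IsConvexCombOfSlices {X : Type*} [NormedAddCommGroup X] [NormedSpace ℝ X]
    (A C : Set X) : Prop :=
  ∃ (n : ℕ) (S : Fin n → Set X) (l : Fin n → ℝ),
    (∀ i, IsSlice A (S i)) ∧ (∀ i, 0 ≤ l i) ∧ ∑ i, l i = 1 ∧
    C = {x | ∃ y : Fin n → X, (∀ i, y i ∈ S i) ∧ x = ∑ i, l i • y i}

lemma IsSlice.subset' {A S : Set X} (h : IsSlice A S) : S ⊆ A := by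
  obtain ⟨-, f, α, hα, rfl⟩ := h
  exact fun x hx => hx.1

/-- if for every `ε > 0` some convex combination of slices of `A` is contained
in `a + εB_X`, then `a` is an SCD point of `A`; in particular every strongly regular point of
`A` is an SCD point of `A`. -/
theorem stmt6 {X : Type*} [NormedAddCommGroup X] [NormedSpace ℝ X] [CompleteSpace X]
    (A : Set X) (hA : A.Nonempty) (hAb : Bornology.IsBounded A) (hAc : Convex ℝ A)
    (a : X) (ha : a ∈ A) :
    ((∀ ε > (0 : ℝ), ∃ C : Set X, IsConvexCombOfSlices A C ∧ C ⊆ Metric.closedBall a ε) →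
      SCDPoint A a) ∧
    ((∀ ε > (0 : ℝ), ∃ C : Set X, IsConvexCombOfSlices A C ∧ a ∈ C ∧ Metric.diam C ≤ ε) →
      SCDPoint A a) := by
  have key : (∀ ε > (0 : ℝ), ∃ C : Set X, IsConvexCombOfSlices A C ∧
      C ⊆ Metric.closedBall a ε) → SCDPoint A a := by
    intro h
    refine ⟨ha, ?_⟩
    choose C hC hCb using fun k : ℕ => h (1 / (k + 1)) (by positivity)
    choose n S l hS hl hsum hCeq using hC
    have hn : ∀ k, 0 < n k := by
      intro k
      rcases Nat.eq_zero_or_pos (n k) with hk | hk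
      · exfalso
        have h1 := hsum k
        haveI : IsEmpty (Fin (n k)) := by rw [hk]; infer_instance
        simp at h1
      · exact hk
    set T : ℕ → ℕ → Set X := fun k j => S k ⟨j % n k, Nat.mod_lt _ (hn k)⟩ with hT
    refine ⟨fun m => T m.unpair.1 m.unpair.2, fun m => hS _ _, ?_⟩
    intro B hB hmeets
    rw [Metric.mem_closure_iff]
    intro ε hε
    obtain ⟨k, hk⟩ := exists_nat_one_div_lt hε
    have hmeet : ∀ i : Fin (n k), (B ∩ S k i).Nonempty := by
      intro i
      have h1 := hmeets (Nat.pair k i.1)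
      simp only [Nat.unpair_pair] at h1
      rw [hT] at h1
      simp only at h1
      rwa [show (⟨i.1 % n k, Nat.mod_lt _ (hn k)⟩ : Fin (n k)) = i from
        Fin.ext (Nat.mod_eq_of_lt i.2)] at h1
    choose y hyB hyS using hmeet
    refine ⟨∑ i, l k i • y i, ?_, ?_⟩
    · exact (convex_convexHull ℝ B).sum_mem (fun i _ => hl k i) (hsum k)
        (fun i _ => subset_convexHull ℝ B (hyB i))
    · have hx : (∑ i, l k i • y i) ∈ C k := by
        rw [hCeq k]; exact ⟨y, hyS, rfl⟩
      have h2 := hCb k hx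
      rw [Metric.mem_closedBall] at h2
      calc dist a (∑ i, l k i • y i) = dist (∑ i, l k i • y i) a := dist_comm _ _
        _ ≤ 1 / (k + 1) := h2
        _ < ε := by exact_mod_cast hk
  refine ⟨key, fun h => key ?_⟩
  intro ε hε
  obtain ⟨C, hC, haC, hd⟩ := h ε hε
  have hCA : C ⊆ A := by
    obtain ⟨m, S, l, hS, hl, hsum, hCeq⟩ := hC
    rw [hCeq]
    rintro x ⟨y, hy, rfl⟩
    exact hAc.sum_mem (fun i _ => hl i) hsum (fun i _ => (hS i).subset' (hy i))
  refine ⟨C, hC, fun x hx => ?_⟩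
  rw [Metric.mem_closedBall]
  exact le_trans (Metric.dist_le_diam_of_mem (hAb.subset hCA) hx haC) hd
end

section
/- Let X be a real Banach space. Then SCD(B_X) = ∅ if and only if 0 is not an SCD point of B_X. -/
open Set Metric

variable {X : Type*} [NormedAddCommGroup X] [NormedSpace ℝ X]

lemma ball_neg_mem {x : X} (hx : x ∈ Metric.closedBall (0 : X) 1) :
    -x ∈ Metric.closedBall (0 : X) 1 := by
  simpa [mem_closedBall_zero_iff] using hx

lemma neg_slice {S : Set X} (h : IsSlice (Metric.closedBall (0 : X) 1) S) :
    IsSlice (Metric.closedBall (0 : X) 1) (-S) := by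
  obtain ⟨⟨s, hs⟩, f, α, hα, hS⟩ := h
  set A := Metric.closedBall (0 : X) 1
  have himg : (⇑(-f)) '' A = ⇑f '' A := by
    ext y
    constructor
    · rintro ⟨x, hx, rfl⟩
      exact ⟨-x, ball_neg_mem hx, by simp⟩
    · rintro ⟨x, hx, rfl⟩
      exact ⟨-x, ball_neg_mem hx, by simp⟩
  refine ⟨⟨-s, by simpa using hs⟩, -f, α, hα, ?_⟩
  ext x
  rw [Set.mem_neg, hS, Set.mem_setOf_eq, Set.mem_setOf_eq, himg]
  have hfx : (-f) x = f (-x) := by simp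
  rw [hfx]
  constructor
  · rintro ⟨hx, h2⟩
    have hx' : x ∈ Metric.closedBall (0 : X) 1 := by
      simpa [mem_closedBall_zero_iff] using ball_neg_mem hx
    exact ⟨hx', h2⟩
  · rintro ⟨hx, h2⟩
    exact ⟨ball_neg_mem hx, h2⟩


/-- the unit ball of a Banach space has no SCD points iff `0` is not an
SCD point of the unit ball. -/
theorem stmt7 {X : Type*} [NormedAddCommGroup X] [NormedSpace ℝ X] [CompleteSpace X] :
    {a | SCDPoint (Metric.closedBall (0 : X) 1) a} = ∅ ↔
      ¬ SCDPoint (Metric.closedBall (0 : X) 1) 0 := by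
  constructor
  · intro h h0
    have : (0 : X) ∈ ({a | SCDPoint (Metric.closedBall (0 : X) 1) a} : Set X) := h0
    rw [h] at this
    exact this
  · intro h0
    ext a
    simp only [Set.mem_setOf_eq, Set.mem_empty_iff_false, iff_false]
    rintro ⟨ha, V, hslice, hdet⟩
    apply h0
    refine ⟨by simp, fun n => if Even n then V (n / 2) else -V (n / 2), fun n => ?_, ?_⟩
    · by_cases hn : Even n
      · simpa [hn] using hslice (n / 2)
      · simpa [hn] using neg_slice (hslice (n / 2))
    · intro B hB hmeet
      have hmeetV : ∀ n, (B ∩ V n).Nonempty := by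
        intro n
        have h := hmeet (2 * n)
        simpa [Nat.even_mul, Nat.mul_div_cancel_left] using h
      have hmeetV' : ∀ n, ((-B) ∩ V n).Nonempty := by
        intro n
        obtain ⟨x, hxB, hxV⟩ := hmeet (2 * n + 1)
        have hxV' : x ∈ -V n := by
          simpa [Nat.even_add_one, Nat.even_mul, show (2 * n + 1) / 2 = n from by omega]
            using hxV
        exact ⟨-x, Set.neg_mem_neg.mpr hxB, hxV'⟩
      have hBneg : -B ⊆ Metric.closedBall (0 : X) 1 := fun x hx => by
        have h := hB (Set.mem_neg.mp hx)
        rw [mem_closedBall_zero_iff] at h ⊢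
        simpa using h
      have h1 : a ∈ closure (convexHull ℝ B) := hdet B hB hmeetV
      have h2 : a ∈ closure (convexHull ℝ (-B)) := hdet (-B) hBneg hmeetV'
      have h2' : -a ∈ closure (convexHull ℝ B) := by
        have : -a ∈ (fun x => -x) '' closure (convexHull ℝ (-B)) := ⟨a, h2, rfl⟩
        have hmap : (fun x : X => -x) '' closure (convexHull ℝ (-B)) ⊆
            closure ((fun x : X => -x) '' convexHull ℝ (-B)) :=
          image_closure_subset_closure_image continuous_neg
        have := hmap this
        rwa [Set.image_neg_eq_neg, convexHull_neg, neg_neg] at this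
      have hconv : Convex ℝ (closure (convexHull ℝ B)) := (convex_convexHull ℝ B).closure
      have := hconv h1 h2' (by norm_num : (0:ℝ) ≤ 1/2) (by norm_num : (0:ℝ) ≤ 1/2) (by norm_num)
      simpa using this
end

section
/- Let X be a real Banach space whose dual X* fails the (−1)-ball covering property. Then SCD(B_X) = ∅. -/
open Set Metric

variable {X : Type*} [NormedAddCommGroup X] [NormedSpace ℝ X]

/-- A Banach space `Z` fails the `(−1)`-ball covering property. -/
def FailsMinusOneBCP (Z : Type*) [NormedAddCommGroup Z] [NormedSpace ℝ Z] : Prop :=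
  ∀ Y : Submodule ℝ Z, IsClosed (Y : Set Z) → TopologicalSpace.IsSeparable (Y : Set Z) →
    ∃ z : Z, ‖z‖ = 1 ∧ ∀ y ∈ Y, ∀ l : ℝ, ‖y + l • z‖ = ‖y‖ + |l|

/-!
If `a` were an SCD point of `B_X`, determined by slices `S(B_X, fₙ, αₙ)`, failure of the
`(−1)`-BCP in `X*` gives a norm-one `z` that is L-orthogonal to every `fₙ`:
`‖fₙ + l z‖ = ‖fₙ‖ + |l|`. Norming `fₙ + z` almost, we find in every slice a point where
`z > 1 - ε`, so the set `{x ∈ B_X : z x > 1 - ε}` meets all slices and `a` lies in the closure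
of its convex hull, whence `z a ≥ 1`. The same argument for `-z` gives `z a ≤ -1`.
-/

namespace ContinuousLinearMap

lemma apply_le_opNorm_of_norm_le_one (f : StrongDual ℝ X) {x : X} (hx : ‖x‖ ≤ 1) :
    f x ≤ ‖f‖ :=
  (le_abs_self _).trans ((f.le_opNorm_of_le hx).trans_eq (mul_one _))

lemma exists_norm_le_one_lt_apply (f : StrongDual ℝ X) {c : ℝ} (hc : c < ‖f‖) :
    ∃ x : X, ‖x‖ ≤ 1 ∧ c < f x := by
  obtain ⟨x, hx, hfx⟩ := f.exists_lt_apply_of_lt_opNorm hc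
  rcases lt_abs.mp hfx with hfx | hfx
  · exact ⟨x, hx.le, hfx⟩
  · exact ⟨-x, by simpa using hx.le, by simpa using hfx⟩

lemma sSup_image_closedBall_le_opNorm (f : StrongDual ℝ X) :
    sSup (f '' closedBall 0 1) ≤ ‖f‖ :=
  Real.sSup_le (by
    rintro _ ⟨x, hx, rfl⟩
    exact f.apply_le_opNorm_of_norm_le_one (mem_closedBall_zero_iff.mp hx)) (norm_nonneg f)

lemma le_apply_of_mem_closure_convexHull (g : StrongDual ℝ X) {B : Set X} {c : ℝ}
    (hB : ∀ b ∈ B, c ≤ g b) {a : X} (ha : a ∈ closure (convexHull ℝ B)) : c ≤ g a :=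
  closure_minimal (convexHull_min hB (convex_halfSpace_ge g.isLinear c))
    (isClosed_le continuous_const g.continuous) ha

end ContinuousLinearMap

open ContinuousLinearMap

/-- Almost norming `f + z` almost norms `f` and `z` simultaneously. -/
lemma exists_almost_norming_of_norm_add_smul_eq {f z : StrongDual ℝ X} (hz : ‖z‖ ≤ 1)
    (hfz : ∀ l : ℝ, ‖f + l • z‖ = ‖f‖ + |l|) {α ε : ℝ} (hα : 0 < α) (hε : 0 < ε) :
    ∃ x : X, ‖x‖ ≤ 1 ∧ ‖f‖ - α < f x ∧ 1 - ε < z x := by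
  have hnorm : ‖f + z‖ = ‖f‖ + 1 := by simpa using hfz 1
  obtain ⟨x, hx, hfzx⟩ := (f + z).exists_norm_le_one_lt_apply (c := ‖f‖ + 1 - min α ε)
    (by rw [hnorm]; linarith [lt_min hα hε])
  have hfx := f.apply_le_opNorm_of_norm_le_one hx
  have hzx := (z.apply_le_opNorm_of_norm_le_one hx).trans hz
  rw [add_apply] at hfzx
  exact ⟨x, hx, by linarith [min_le_left α ε], by linarith [min_le_right α ε]⟩

lemma one_le_apply_of_determining {V : ℕ → Set X} {f : ℕ → StrongDual ℝ X} {α : ℕ → ℝ}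
    (hα : ∀ n, 0 < α n)
    (hV : ∀ n, V n = {x | x ∈ closedBall 0 1 ∧ sSup (f n '' closedBall 0 1) - α n < f n x})
    {a : X} (hdet : Determining (closedBall 0 1) V a) {z : StrongDual ℝ X} (hz : ‖z‖ ≤ 1)
    (horth : ∀ n, ∀ l : ℝ, ‖f n + l • z‖ = ‖f n‖ + |l|) : 1 ≤ z a := by
  refine le_of_forall_sub_le fun ε hε => ?_
  let B : Set X := {x | x ∈ closedBall 0 1 ∧ 1 - ε < z x}
  have hmeets : ∀ n, (B ∩ V n).Nonempty := by
    intro n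
    obtain ⟨x, hx, hfx, hzx⟩ := exists_almost_norming_of_norm_add_smul_eq hz (horth n) (hα n) hε
    have hxball : x ∈ closedBall (0 : X) 1 := mem_closedBall_zero_iff.mpr hx
    refine ⟨x, ⟨hxball, hzx⟩, ?_⟩
    rw [hV n]
    exact ⟨hxball, by linarith [(f n).sSup_image_closedBall_le_opNorm]⟩
  exact z.le_apply_of_mem_closure_convexHull (fun b hb => hb.2.le)
    (hdet B (fun _ hb => hb.1) hmeets)

theorem stmt9_general {X : Type*} [NormedAddCommGroup X] [NormedSpace ℝ X]
    (h : FailsMinusOneBCP (StrongDual ℝ X)) :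
    {a | SCDPoint (Metric.closedBall (0 : X) 1) a} = ∅ := by
  refine eq_empty_of_forall_notMem fun a ⟨_, V, hV, hdet⟩ => ?_
  choose _ f α hα hVeq using hV
  let Y := (Submodule.span ℝ (range f)).topologicalClosure
  have hYsep : TopologicalSpace.IsSeparable (Y : Set (StrongDual ℝ X)) :=
    (countable_range f).isSeparable.span.closure
  obtain ⟨z, hz, hzY⟩ := h Y (Submodule.isClosed_topologicalClosure _) hYsep
  have horth : ∀ n, ∀ l : ℝ, ‖f n + l • z‖ = ‖f n‖ + |l| := fun n =>
    hzY (f n) (Submodule.le_topologicalClosure _ (Submodule.subset_span (mem_range_self n)))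
  have hpos := one_le_apply_of_determining hα hVeq hdet hz.le horth
  have hneg := one_le_apply_of_determining hα hVeq hdet (z := -z) (by rw [norm_neg, hz])
    (fun n l => by rw [smul_neg, ← neg_smul, horth, abs_neg])
  rw [neg_apply] at hneg
  linarith

/-- if the dual of `X` fails the `(−1)`-ball covering property, then the
closed unit ball of `X` has no SCD points. -/
theorem stmt9 {X : Type*} [NormedAddCommGroup X] [NormedSpace ℝ X] [CompleteSpace X]
    (h : FailsMinusOneBCP (StrongDual ℝ X)) :
    {a | SCDPoint (Metric.closedBall (0 : X) 1) a} = ∅ :=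
  stmt9_general h
end

section
/- Let {X_n : n ∈ ℕ} be a sequence of nontrivial real Banach spaces (each X_n ≠ {0}), let 1 < p < ∞, and let X_p = (⊕_{n=1}^∞ X_n)_{ℓ_p} be their ℓ_p-sum. Then 0 is an SCD point of B_{X_p}. -/
open Set Metric

variable {X : Type*} [NormedAddCommGroup X] [NormedSpace ℝ X]

/-! Use the slices `{x ∈ B_{X_p} : g_n (x n) > 1 - α}`, with `g_n` a norm-one functional on `X_n`.
Since `‖x‖ ^ p = ‖x n‖ ^ p + ‖x - single n (x n)‖ ^ p`, a point of such a slice is, for small `α`,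
close to `single n (x n)`. A set meeting every slice thus contains points `b_1, …, b_k` close to
vectors of norm `≤ 1` with disjoint supports, whose sum has norm `≤ k ^ (1/p)`; so the average of
the `b_i` has norm about `k ^ (1/p - 1)`, which tends to `0`. -/

open Filter Topology

theorem IsSlice.of_nonempty {A : Set X} (hA : A.Nonempty) (f : X →L[ℝ] ℝ) {α : ℝ} (hα : 0 < α) :
    IsSlice A {x | x ∈ A ∧ sSup (f '' A) - α < f x} := by
  refine ⟨?_, f, α, hα, rfl⟩
  obtain ⟨_, ⟨x, hxA, rfl⟩, hx⟩ := exists_lt_of_lt_csSup (hA.image f) (sub_lt_self _ hα)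
  exact ⟨x, hxA, hx⟩

theorem SCDPoint.of_countable {ι : Type*} [Countable ι] [Nonempty ι] {A : Set X} {a : X}
    (ha : a ∈ A) (V : ι → Set X) (hV : ∀ i, IsSlice A (V i))
    (hdet : ∀ B ⊆ A, (∀ i, (B ∩ V i).Nonempty) → a ∈ closure (convexHull ℝ B)) :
    SCDPoint A a := by
  obtain ⟨e, he⟩ := exists_surjective_nat ι
  refine ⟨ha, V ∘ e, fun n => hV (e n), fun B hB hBV => hdet B hB fun i => ?_⟩
  obtain ⟨n, rfl⟩ := he i
  exact hBV n

theorem ContinuousLinearMap.sSup_image_unitClosedBall (f : X →L[ℝ] ℝ) :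
    sSup (f '' closedBall 0 1) = ‖f‖ := by
  have hne : (closedBall (0 : X) 1).Nonempty := nonempty_closedBall.mpr zero_le_one
  have hbdd : BddAbove (f '' closedBall 0 1) :=
    (f.lipschitz.isBounded_image isBounded_closedBall).bddAbove
  refine le_antisymm (csSup_le (hne.image f) ?_) ?_
  · rintro _ ⟨x, hx, rfl⟩
    exact (le_abs_self _).trans (f.unit_le_opNorm x (mem_closedBall_zero_iff.1 hx))
  · rw [← f.sSup_unitClosedBall_eq_norm]
    refine csSup_le (hne.image _) ?_
    rintro _ ⟨x, hx, rfl⟩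
    have hx' : -x ∈ closedBall (0 : X) 1 := by simpa using hx
    rcases abs_cases (f x) with ⟨h, -⟩ | ⟨h, -⟩
    · exact le_csSup hbdd ⟨x, hx, by simp [h]⟩
    · exact le_csSup hbdd ⟨-x, hx', by simp [h]⟩

namespace lp

variable {α : Type*} [DecidableEq α] {E : α → Type*} [∀ i, NormedAddCommGroup (E i)] {p : ENNReal}

theorem norm_sub_single_rpow (hp : 0 < p.toReal) (f : lp E p) (i : α) :
    ‖f - lp.single p i (f i)‖ ^ p.toReal = ‖f‖ ^ p.toReal - ‖f i‖ ^ p.toReal := by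
  simpa using lp.norm_compl_sum_single hp f {i}

variable [Fact (1 ≤ p)]

theorem norm_comp_evalCLM [∀ i, NormedSpace ℝ (E i)] (i : α)
    (g : E i →L[ℝ] ℝ) : ‖g.comp (lp.evalCLM ℝ E p i)‖ = ‖g‖ := by
  have hp : 0 < p := zero_lt_one.trans_le Fact.out
  refine le_antisymm ?_ (g.opNorm_le_bound (norm_nonneg _) fun z => ?_)
  · refine (g.opNorm_comp_le _).trans (mul_le_of_le_one_right (norm_nonneg g) ?_)
    exact LinearMap.mkContinuous_norm_le _ zero_le_one _
  · simpa [lp.evalCLM, lp.norm_single hp] using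
      (g.comp (lp.evalCLM ℝ E p i)).le_opNorm (lp.single p i z)

theorem norm_sum_single_le (hp : 0 < p.toReal) (f : ∀ i, E i) (s : Finset α)
    (hf : ∀ i ∈ s, ‖f i‖ ≤ 1) :
    ‖∑ i ∈ s, lp.single p i (f i)‖ ≤ (s.card : ℝ) ^ p.toReal⁻¹ := by
  rw [← Real.rpow_le_rpow_iff (norm_nonneg _) (by positivity) hp,
    ← Real.rpow_mul (Nat.cast_nonneg _), inv_mul_cancel₀ hp.ne', Real.rpow_one,
    lp.norm_sum_single hp]
  calc ∑ i ∈ s, ‖f i‖ ^ p.toReal ≤ ∑ _i ∈ s, (1 : ℝ) :=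
        Finset.sum_le_sum fun i hi => Real.rpow_le_one (norm_nonneg _) (hf i hi) hp.le
    _ = s.card := by simp

theorem exists_forall_norm_sub_single_lt (hp : 1 < p.toReal) {δ : ℝ} (hδ : 0 < δ) :
    ∃ β > 0, ∀ (f : lp E p) (i : α), ‖f‖ ≤ 1 → 1 - β < ‖f i‖ →
      ‖f - lp.single p i (f i)‖ < δ := by
  set q := p.toReal
  have hq : 0 < q := zero_lt_one.trans hp
  have hδq : 0 < δ ^ q := Real.rpow_pos_of_pos hδ q
  refine ⟨min 1 (δ ^ q / (2 * q)), by positivity, fun f i hf hfi => ?_⟩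
  set β := min 1 (δ ^ q / (2 * q))
  have hβ1 : β ≤ 1 := min_le_left _ _
  -- Bernoulli: a coordinate of norm `> 1 - β` leaves mass `< q β` for the other coordinates.
  have hbern : 1 - q * β ≤ (1 - β) ^ q := by
    simpa [sub_eq_add_neg] using one_add_mul_self_le_rpow_one_add (neg_le_neg hβ1) hp.le
  rw [← Real.rpow_lt_rpow_iff (norm_nonneg _) hδ.le hq]
  calc ‖f - lp.single p i (f i)‖ ^ q = ‖f‖ ^ q - ‖f i‖ ^ q := norm_sub_single_rpow hq f i
    _ ≤ 1 - (1 - β) ^ q := sub_le_sub (Real.rpow_le_one (norm_nonneg _) hf hq.le)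
        (Real.rpow_le_rpow (sub_nonneg.2 hβ1) hfi.le hq.le)
    _ ≤ q * (δ ^ q / (2 * q)) := by
        linarith [mul_le_mul_of_nonneg_left (min_le_right 1 (δ ^ q / (2 * q))) hq.le]
    _ < δ ^ q := by
        rw [mul_div_assoc', mul_comm 2 q, mul_div_mul_left _ _ hq.ne']
        linarith

variable [∀ i, NormedSpace ℝ (E i)]

theorem norm_inv_card_smul_sum_lt (hp : 0 < p.toReal) {s : Finset α} (hs : s.Nonempty)
    {b : α → lp E p} (hb : ∀ i ∈ s, ‖b i‖ ≤ 1) {δ : ℝ}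
    (hδ : ∀ i ∈ s, ‖b i - lp.single p i (b i i)‖ < δ) :
    ‖(s.card : ℝ)⁻¹ • ∑ i ∈ s, b i‖ < (s.card : ℝ) ^ (p.toReal⁻¹ - 1) + δ := by
  set n : ℝ := (s.card : ℝ)
  have hn : 0 < n := by simpa [n] using hs.card_pos
  have hsum : ‖∑ i ∈ s, b i‖ < n ^ p.toReal⁻¹ + n * δ :=
    calc ‖∑ i ∈ s, b i‖
        = ‖∑ i ∈ s, lp.single p i (b i i) + ∑ i ∈ s, (b i - lp.single p i (b i i))‖ := by
          rw [← Finset.sum_add_distrib]; simp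
      _ ≤ ‖∑ i ∈ s, lp.single p i (b i i)‖ + ∑ i ∈ s, ‖b i - lp.single p i (b i i)‖ :=
          (norm_add_le _ _).trans (add_le_add le_rfl (norm_sum_le _ _))
      _ < n ^ p.toReal⁻¹ + ∑ _i ∈ s, δ := by
          refine add_lt_add_of_le_of_lt (norm_sum_single_le hp _ s fun i hi => ?_)
            (Finset.sum_lt_sum_of_nonempty hs hδ)
          exact (norm_apply_le_norm (ENNReal.toReal_pos_iff.1 hp).1.ne' _ i).trans (hb i hi)
      _ = n ^ p.toReal⁻¹ + n * δ := by simp [n]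
  calc ‖n⁻¹ • ∑ i ∈ s, b i‖ = n⁻¹ * ‖∑ i ∈ s, b i‖ := by
        rw [norm_smul, norm_inv, Real.norm_of_nonneg hn.le]
    _ < n⁻¹ * (n ^ p.toReal⁻¹ + n * δ) := by gcongr
    _ = n ^ (p.toReal⁻¹ - 1) + δ := by
        rw [Real.rpow_sub_one hn.ne']; field_simp

theorem zero_mem_closure_convexHull [Infinite α] (hp : 1 < p.toReal) {B : Set (lp E p)}
    (hB : B ⊆ closedBall 0 1) (h : ∀ δ > 0, ∀ i, ∃ b ∈ B, ‖b - lp.single p i (b i)‖ < δ) :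
    0 ∈ closure (convexHull ℝ B) := by
  rw [Metric.mem_closure_iff]
  intro ε hε
  have hexp : p.toReal⁻¹ - 1 < 0 := by linarith [inv_lt_one_of_one_lt₀ hp]
  have hdecay : Tendsto (fun k : ℕ => (k : ℝ) ^ (p.toReal⁻¹ - 1)) atTop (𝓝 0) := by
    simpa [Function.comp_def] using
      (tendsto_rpow_neg_atTop (neg_pos.2 hexp)).comp tendsto_natCast_atTop_atTop
  obtain ⟨k, hk, hk0⟩ :=
    ((hdecay.eventually (gt_mem_nhds (half_pos hε))).and (eventually_gt_atTop 0)).exists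
  obtain ⟨s, rfl⟩ := Infinite.exists_subset_card_eq α k
  choose b hbB hb using h (ε / 2) (half_pos hε)
  refine ⟨(s.card : ℝ)⁻¹ • ∑ i ∈ s, b i, ?_, ?_⟩
  · rw [Finset.smul_sum]
    refine (convex_convexHull ℝ B).sum_mem (fun i _ => by positivity) ?_
      fun i _ => subset_convexHull ℝ B (hbB i)
    simp only [Finset.sum_const, nsmul_eq_mul]
    exact mul_inv_cancel₀ (Nat.cast_ne_zero.2 hk0.ne')
  · rw [dist_zero_left]
    have := norm_inv_card_smul_sum_lt (zero_lt_one.trans hp) (Finset.card_pos.1 hk0)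
      (fun i _ => mem_closedBall_zero_iff.1 (hB (hbB i))) fun i _ => hb i
    linarith

end lp

theorem stmt14_general (X : ℕ → Type*) [∀ n, NormedAddCommGroup (X n)] [∀ n, NormedSpace ℝ (X n)]
    [∀ n, Nontrivial (X n)]
    (p : ENNReal) [Fact (1 ≤ p)] (hp1 : 1 < p) (hp2 : p ≠ ⊤) :
    SCDPoint (Metric.closedBall (0 : lp X p) 1) 0 := by
  have hp : 1 < p.toReal := by simpa using ENNReal.toReal_strict_mono hp2 hp1
  choose g hg _ using fun n => exists_dual_vector' ℝ (0 : X n)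
  set A := closedBall (0 : lp X p) 1
  set F : ℕ → lp X p →L[ℝ] ℝ := fun n => (g n).comp (lp.evalCLM ℝ X p n)
  have h0A : (0 : lp X p) ∈ A := mem_closedBall_self zero_le_one
  refine SCDPoint.of_countable h0A
    (fun nm : ℕ × ℕ => {x | x ∈ A ∧ sSup (F nm.1 '' A) - 1 / (nm.2 + 1) < F nm.1 x})
    (fun nm => IsSlice.of_nonempty ⟨0, h0A⟩ _ Nat.one_div_pos_of_nat) fun B hBA hBV => ?_
  refine lp.zero_mem_closure_convexHull hp hBA fun δ hδ n => ?_
  obtain ⟨β, hβ, hsingle⟩ := lp.exists_forall_norm_sub_single_lt (E := X) hp hδ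
  obtain ⟨m, hm⟩ := exists_nat_one_div_lt hβ
  obtain ⟨b, hbB, hbA, hb⟩ := hBV (n, m)
  rw [(F n).sSup_image_unitClosedBall, lp.norm_comp_evalCLM, hg] at hb
  have hFb : F n b ≤ ‖b n‖ := by
    simpa [F, lp.evalCLM, hg] using (le_abs_self _).trans ((g n).le_opNorm (b n))
  exact ⟨b, hbB, hsingle b n (mem_closedBall_zero_iff.1 hbA) (by simp only at hb; linarith)⟩

/-- for a sequence of nontrivial Banach spaces and `1 < p < ∞`, the point
`0` is an SCD point of the unit ball of the `ℓ_p`-sum. -/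
theorem stmt14 (X : ℕ → Type*) [∀ n, NormedAddCommGroup (X n)] [∀ n, NormedSpace ℝ (X n)]
    [∀ n, CompleteSpace (X n)] [∀ n, Nontrivial (X n)]
    (p : ENNReal) [Fact (1 ≤ p)] (hp1 : 1 < p) (hp2 : p ≠ ⊤) :
    SCDPoint (Metric.closedBall (0 : lp X p) 1) 0 :=
  stmt14_general X p hp1 hp2
end
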